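/- Let w′, w ∈ W^J with w′ < w in Bruhat order, and let u, v ∈ W_J with w′u ⋖ wv. Then u can be written as u = rv for some r ∈ W_J with ℓ(u) = ℓ(r) + ℓ(v). -/

import Mathlib

namespace TNNFlag

open Classical

variable {B : Type*} {W : Type*} [Group W] {M : CoxeterMatrix B}

/-- Bruhat order on a Coxeter group, via the subword property: `u ≤ w` iff some reduced word
for `w` contains a sublist that is a reduced word for `u`. -/
def bruhatLE (cs : CoxeterSystem M W) (u w : W) : Prop :=
  ∃ ω : List B, cs.IsReduced ω ∧ cs.wordProd ω = w ∧
    ∃ ω' : List B, ω'.Sublist ω ∧ cs.IsReduced ω' ∧ cs.wordProd ω' = u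

/-- Strict Bruhat order. -/
def bruhatLT (cs : CoxeterSystem M W) (u w : W) : Prop :=
  bruhatLE cs u w ∧ u ≠ w

/-- Bruhat covering: `u ⋖ w`, i.e. `u < w` and `ℓ(w) = ℓ(u) + 1`. -/
def bruhatCov (cs : CoxeterSystem M W) (u w : W) : Prop :=
  bruhatLT cs u w ∧ cs.length w = cs.length u + 1

/-- The standard parabolic subgroup `W_J` generated by the simple reflections `s_j`, `j ∈ J`. -/
def parabolic (cs : CoxeterSystem M W) (J : Set B) : Subgroup W :=
  Subgroup.closure {w | ∃ j ∈ J, w = cs.simple j}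

/-- `W^J`: the set of minimal-length representatives of the cosets `W/W_J`. -/
def minReps (cs : CoxeterSystem M W) (J : Set B) : Set W :=
  {w | ∀ v ∈ parabolic cs J, cs.length w ≤ cs.length (w * v)}

/-- `u₀` is the longest element of the (finite) parabolic subgroup `W_J`. -/
def IsLongest (cs : CoxeterSystem M W) (J : Set B) (u₀ : W) : Prop :=
  u₀ ∈ parabolic cs J ∧ ∀ v ∈ parabolic cs J, cs.length v ≤ cs.length u₀

/-- `W^J_max = {w·u₀ : w ∈ W^J}`: maximal-length coset representatives of `W/W_J`. -/
def maxReps (cs : CoxeterSystem M W) (J : Set B) (u₀ : W) : Set W :=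
  {x | ∃ w ∈ minReps cs J, x = w * u₀}

/-- The index set `𝓘^J` of triples `(x, u, w) ∈ W^J_max × W_J × W^J` with `x ≤ wu`. -/
def IndexSet (cs : CoxeterSystem M W) (J : Set B) (u₀ : W) : Set (W × W × W) :=
  {t | t.1 ∈ maxReps cs J u₀ ∧ t.2.1 ∈ parabolic cs J ∧ t.2.2 ∈ minReps cs J ∧
    bruhatLE cs t.1 (t.2.2 * t.2.1)}

/-- The order relation between cells: `Q_{a,b,c} ≤ Q_{x,u,w}` iff the triples are equal or
there exist `b₁, b₂ ∈ W_J` with `b = b₁b₂`, `ℓ(b) = ℓ(b₁) + ℓ(b₂)` and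
`xu⁻¹ ≤ ab₂⁻¹ ≤ cb₁ ≤ w` in Bruhat order. Here `t = (a,b,c)` and `t' = (x,u,w)`. -/
def cellLE (cs : CoxeterSystem M W) (J : Set B) (t t' : W × W × W) : Prop :=
  t = t' ∨
    ∃ b₁ b₂ : W, b₁ ∈ parabolic cs J ∧ b₂ ∈ parabolic cs J ∧ t.2.1 = b₁ * b₂ ∧
      cs.length t.2.1 = cs.length b₁ + cs.length b₂ ∧
      bruhatLE cs (t'.1 * t'.2.1⁻¹) (t.1 * b₂⁻¹) ∧
      bruhatLE cs (t.1 * b₂⁻¹) (t.2.2 * b₁) ∧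
      bruhatLE cs (t.2.2 * b₁) t'.2.2

/-- The order of `𝓠^J`, on `Option (W × W × W)`, where `none` is the least element `0̂` and
`some (x,u,w)` is the cell `Q_{x,u,w}`. -/
def QLE (cs : CoxeterSystem M W) (J : Set B) :
    Option (W × W × W) → Option (W × W × W) → Prop
  | none, _ => True
  | some _, none => False
  | some t, some t' => cellLE cs J t t'

/-- Membership in `𝓠^J`: `0̂` together with the cells indexed by `𝓘^J`. -/
def Qmem (cs : CoxeterSystem M W) (J : Set B) (u₀ : W) : Option (W × W × W) → Prop
  | none => True
  | some t => t ∈ IndexSet cs J u₀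

/-- Strict order of `𝓠^J`. -/
def QLT (cs : CoxeterSystem M W) (J : Set B) (p q : Option (W × W × W)) : Prop :=
  QLE cs J p q ∧ p ≠ q

/-- Covering relation of `𝓠^J`. -/
def QCov (cs : CoxeterSystem M W) (J : Set B) (u₀ : W) (p q : Option (W × W × W)) : Prop :=
  Qmem cs J u₀ p ∧ Qmem cs J u₀ q ∧ QLT cs J p q ∧
    ∀ z, Qmem cs J u₀ z → QLT cs J p z → QLT cs J z q → False

/-- The rank function of `𝓠^J`: `ρ(0̂) = 0` and `ρ(Q_{x,u,w}) = ℓ(wu) - ℓ(x) + 1`. -/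
noncomputable def Qrank (cs : CoxeterSystem M W) : Option (W × W × W) → ℕ
  | none => 0
  | some t => cs.length (t.2.2 * t.2.1) - cs.length t.1 + 1

end TNNFlag
namespace TNNFlag

variable {B : Type*} {W : Type*} [Group W] {M : CoxeterMatrix B}

section Aux

open Classical List

/-- Count (mod 2) of occurrences of `t` in a list. -/
noncomputable def cnt (l : List W) (t : W) : ZMod 2 :=
  (l.map fun u => if u = t then (1 : ZMod 2) else 0).sum

@[simp] lemma cnt_nil (t : W) : cnt ([] : List W) t = 0 := rfl

lemma cnt_cons (a : W) (l : List W) (t : W) :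
    cnt (a :: l) t = (if a = t then (1 : ZMod 2) else 0) + cnt l t := by
  simp [cnt]

lemma cnt_append (l₁ l₂ : List W) (t : W) :
    cnt (l₁ ++ l₂) t = cnt l₁ t + cnt l₂ t := by
  simp [cnt]

lemma mem_of_cnt_ne_zero {l : List W} {t : W} (h : cnt l t ≠ 0) : t ∈ l := by
  induction l with
  | nil => simp [cnt] at h
  | cons a l ih =>
    rw [cnt_cons] at h
    by_cases ha : a = t
    · simp [ha]
    · simp only [ha, if_false, zero_add] at h
      exact List.mem_cons_of_mem _ (ih h)

lemma cnt_map_conj (l : List W) (a t : W) :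
    cnt (l.map fun u => a * u * a⁻¹) t = cnt l (a⁻¹ * t * a) := by
  induction l with
  | nil => simp
  | cons b l ih =>
    simp only [List.map_cons, cnt_cons, ih]
    congr 1
    have : a * b * a⁻¹ = t ↔ b = a⁻¹ * t * a := by
      constructor
      · intro h; rw [← h]; group
      · intro h; rw [h]; group
    simp [this]

lemma cnt_reverse (l : List W) (t : W) : cnt l.reverse t = cnt l t := by
  simp [cnt, List.sum_reverse]

variable (cs : CoxeterSystem M W)

local prefix:100 "s" => cs.simple
local prefix:100 "π" => cs.wordProd
local prefix:100 "ℓ" => cs.length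
local prefix:100 "ris" => cs.rightInvSeq

/-- The basic involution used for the reflection-counting representation. -/
noncomputable def prePerm (i : B) : W × ZMod 2 → W × ZMod 2 :=
  fun q => (s i * q.1 * s i, q.2 + if q.1 = s i then 1 else 0)

lemma simple_conj_eq_simple_iff (i : B) (u : W) :
    (s i * u * s i = s i) ↔ (u = s i) := by
  constructor
  · intro h
    have : s i * (s i * u * s i) * s i = s i * s i * s i := by rw [h]
    rw [← mul_assoc, ← mul_assoc] at this
    rw [cs.simple_mul_simple_self] at this
    simpa [mul_assoc, cs.simple_mul_simple_self] using this
  · intro h; rw [h]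
    rw [cs.simple_mul_simple_self, one_mul]

lemma prePerm_involutive (i : B) : Function.Involutive (prePerm cs i) := by
  intro q
  simp only [prePerm]
  have hss := cs.simple_mul_simple_self i
  have h1 : s i * (s i * q.1 * s i) * s i = q.1 := by
    calc s i * (s i * q.1 * s i) * s i = (s i * s i) * q.1 * (s i * s i) := by group
    _ = q.1 := by rw [hss]; group
  have h2 := simple_conj_eq_simple_iff cs i q.1
  have h11 : (1 : ZMod 2) + 1 = 0 := by decide
  refine Prod.ext h1 ?_
  show (q.2 + if q.1 = s i then 1 else 0) + (if s i * q.1 * s i = s i then 1 else 0) = q.2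
  simp only [h2]
  by_cases h : q.1 = s i <;> simp [h, add_assoc, h11]


/-- The permutation of `W × ZMod 2` associated to a simple reflection. -/
noncomputable def refPerm (i : B) : Equiv.Perm (W × ZMod 2) :=
  (prePerm_involutive cs i).toPerm

@[simp] lemma refPerm_apply (i : B) (q : W × ZMod 2) :
    refPerm cs i q = (s i * q.1 * s i, q.2 + if q.1 = s i then 1 else 0) := rfl

lemma simple_mul_pow (i i' : B) (k : ℕ) :
    s i' * (s i * s i') ^ k = ((s i * s i')⁻¹) ^ k * s i' := by
  induction k with
  | zero => simp
  | succ k ih =>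
    have key : s i' * (s i * s i') = (s i * s i')⁻¹ * s i' := by
      rw [mul_inv_rev, cs.inv_simple, cs.inv_simple]
      group
    calc s i' * (s i * s i') ^ (k + 1) = (s i' * (s i * s i') ^ k) * (s i * s i') := by
          rw [pow_succ]; group
    _ = ((s i * s i')⁻¹) ^ k * (s i' * (s i * s i')) := by rw [ih]; group
    _ = ((s i * s i')⁻¹) ^ (k + 1) * s i' := by rw [key, pow_succ]; group

lemma refPerm_mul_pow_apply (i i' : B) (n : ℕ) (t : W) (z : ZMod 2) :
    ((refPerm cs i * refPerm cs i') ^ n) (t, z) =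
      ((s i * s i') ^ n * t * ((s i * s i') ^ n)⁻¹,
        z + ∑ k ∈ Finset.range n,
          ((if (s i * s i') ^ k * t * ((s i * s i') ^ k)⁻¹ = s i' then (1 : ZMod 2) else 0) +
           (if s i' * ((s i * s i') ^ k * t * ((s i * s i') ^ k)⁻¹) * s i' = s i then (1 : ZMod 2) else 0))) := by
  induction n with
  | zero => simp
  | succ n ih =>
    rw [pow_succ', Equiv.Perm.mul_apply, ih]
    rw [Equiv.Perm.mul_apply, refPerm_apply, refPerm_apply]
    set p := s i * s i' with hp
    refine Prod.ext ?_ ?_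
    · show s i * (s i' * (p ^ n * t * (p ^ n)⁻¹) * s i') * s i = p ^ (n+1) * t * (p ^ (n+1))⁻¹
      have hinv : s i' * s i = p⁻¹ := by
        rw [hp, mul_inv_rev, cs.inv_simple, cs.inv_simple]
      calc s i * (s i' * (p ^ n * t * (p ^ n)⁻¹) * s i') * s i
          = (s i * s i') * (p ^ n * t * (p ^ n)⁻¹) * (s i' * s i) := by group
        _ = p * (p ^ n * t * (p ^ n)⁻¹) * p⁻¹ := by rw [← hp, hinv]
        _ = p ^ (n+1) * t * (p ^ (n+1))⁻¹ := by rw [pow_succ']; group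
    · show (z + _) + _ + _ = z + _
      rw [Finset.sum_range_succ, add_assoc, add_assoc]

lemma conj_eq_iff (a u v : W) : (a * u * a⁻¹ = v) ↔ (u = a⁻¹ * v * a) := by
  constructor
  · intro h; rw [← h]; group
  · intro h; rw [h]; group

lemma sum_range_two_mul (F : ℕ → ZMod 2) (m : ℕ) :
    ∑ j ∈ Finset.range (2 * m), F j = ∑ k ∈ Finset.range m, (F (2 * k) + F (2 * k + 1)) := by
  induction m with
  | zero => simp
  | succ m ih =>
    have h2 : 2 * (m + 1) = (2 * m + 1) + 1 := by ring
    rw [h2, Finset.sum_range_succ, Finset.sum_range_succ, ih, Finset.sum_range_succ, add_assoc]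

lemma sum_range_add' (F : ℕ → ZMod 2) (m n : ℕ) :
    ∑ j ∈ Finset.range (m + n), F j
      = (∑ j ∈ Finset.range m, F j) + ∑ j ∈ Finset.range n, F (m + j) := by
  induction n with
  | zero => simp
  | succ n ih => rw [← add_assoc, Finset.sum_range_succ, ih, Finset.sum_range_succ, add_assoc]

lemma refPerm_liftable : M.IsLiftable (fun i => refPerm cs i) := by
  intro i i'
  set m := M i i' with hm
  have hpm : (s i * s i') ^ m = 1 := cs.simple_mul_simple_pow i i'
  refine Equiv.ext fun q => ?_
  obtain ⟨t, z⟩ := q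
  show ((refPerm cs i * refPerm cs i') ^ m) (t, z) = (t, z)
  rw [refPerm_mul_pow_apply, hpm]
  set p := s i * s i' with hp
  set r := p⁻¹ with hr
  have hrm : r ^ m = 1 := by rw [hr, inv_pow, hpm, inv_one]
  have hsp : ∀ k : ℕ, s i' * p ^ k = r ^ k * s i' := by
    intro k
    rw [hr, hp]
    exact simple_mul_pow cs i i' k
  have key : ∀ k : ℕ, (p ^ k)⁻¹ * s i' * p ^ k = r ^ (2 * k) * s i' := by
    intro k
    calc (p ^ k)⁻¹ * s i' * p ^ k = (p ^ k)⁻¹ * (r ^ k * s i') := by rw [mul_assoc, hsp k]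
    _ = r ^ k * r ^ k * s i' := by rw [hr, inv_pow]; group
    _ = r ^ (2 * k) * s i' := by rw [two_mul, pow_add]
  have key2 : ∀ k : ℕ, (p ^ k)⁻¹ * (s i' * s i * s i') * p ^ k = r ^ (2 * k + 1) * s i' := by
    intro k
    have h1 : s i' * s i * s i' = r * s i' := by
      rw [hr, hp, mul_inv_rev, cs.inv_simple, cs.inv_simple]
    have h2 : (p ^ k)⁻¹ = r ^ k := by rw [hr, inv_pow]
    have h3 : k + 1 + k = 2 * k + 1 := by omega
    calc (p ^ k)⁻¹ * (s i' * s i * s i') * p ^ k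
        = (p ^ k)⁻¹ * r * (s i' * p ^ k) := by rw [h1]; group
    _ = r ^ k * r ^ 1 * (r ^ k * s i') := by rw [hsp k, h2, pow_one]
    _ = (r ^ k * r ^ 1 * r ^ k) * s i' := by group
    _ = r ^ (2 * k + 1) * s i' := by rw [← pow_add, ← pow_add, h3]
  have hcond1 : ∀ k : ℕ, (p ^ k * t * (p ^ k)⁻¹ = s i') ↔ (t = r ^ (2 * k) * s i') := by
    intro k
    rw [conj_eq_iff, key k]
  have hcond2 : ∀ k : ℕ,
      (s i' * (p ^ k * t * (p ^ k)⁻¹) * s i' = s i) ↔ (t = r ^ (2 * k + 1) * s i') := by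
    intro k
    have h1 : (s i' * (p ^ k * t * (p ^ k)⁻¹) * s i' = s i)
        ↔ (p ^ k * t * (p ^ k)⁻¹ = s i' * s i * s i') := by
      have h0 := conj_eq_iff (s i') (p ^ k * t * (p ^ k)⁻¹) (s i)
      rwa [cs.inv_simple] at h0
    rw [h1, conj_eq_iff, key2 k]
  refine Prod.ext (by simp) ?_
  show z + ∑ k ∈ Finset.range m, _ = z
  have hsum : (∑ k ∈ Finset.range m,
      ((if p ^ k * t * (p ^ k)⁻¹ = s i' then (1 : ZMod 2) else 0) +
       (if s i' * (p ^ k * t * (p ^ k)⁻¹) * s i' = s i then (1 : ZMod 2) else 0))) = 0 := by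
    have hterm : ∀ k : ℕ,
        ((if p ^ k * t * (p ^ k)⁻¹ = s i' then (1 : ZMod 2) else 0) +
         (if s i' * (p ^ k * t * (p ^ k)⁻¹) * s i' = s i then (1 : ZMod 2) else 0))
        = ((if t = r ^ (2 * k) * s i' then (1 : ZMod 2) else 0) +
           (if t = r ^ (2 * k + 1) * s i' then (1 : ZMod 2) else 0)) := by
      intro k
      rw [if_congr (hcond1 k) rfl rfl, if_congr (hcond2 k) rfl rfl]
    rw [Finset.sum_congr rfl (fun k _ => hterm k)]
    rw [← sum_range_two_mul (fun j => if t = r ^ j * s i' then (1 : ZMod 2) else 0) m]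
    rw [two_mul, sum_range_add']
    have hper : ∀ j : ℕ, (if t = r ^ (m + j) * s i' then (1 : ZMod 2) else 0)
        = (if t = r ^ j * s i' then (1 : ZMod 2) else 0) := by
      intro j
      rw [pow_add, hrm, one_mul]
    rw [Finset.sum_congr rfl (fun j _ => hper j)]
    have : ∀ a : ZMod 2, a + a = 0 := by decide
    exact this _
  rw [hsum, add_zero]


/-- The reflection-counting representation `W →* Perm (W × ZMod 2)`. -/
noncomputable def refRep : W →* Equiv.Perm (W × ZMod 2) :=
  cs.lift ⟨fun i => refPerm cs i, refPerm_liftable cs⟩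

lemma refRep_simple (i : B) : refRep cs (s i) = refPerm cs i :=
  cs.lift_apply_simple (refPerm_liftable cs) i

lemma refRep_wordProd (ω : List B) (t : W) (z : ZMod 2) :
    refRep cs (π ω) (t, z) = (π ω * t * (π ω)⁻¹, z + cnt (ris ω) t) := by
  induction ω generalizing z with
  | nil => simp [cs.wordProd_nil]
  | cons i ω ih =>
    rw [cs.wordProd_cons, map_mul, Equiv.Perm.mul_apply, ih, refRep_simple, refPerm_apply]
    have hc : cnt (ris (i :: ω)) t
        = (if (π ω)⁻¹ * s i * π ω = t then (1 : ZMod 2) else 0) + cnt (ris ω) t := by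
      show cnt ((π ω)⁻¹ * s i * π ω :: ris ω) t = _
      rw [cnt_cons]
    have hiff : (π ω * t * (π ω)⁻¹ = s i) ↔ ((π ω)⁻¹ * s i * π ω = t) := by
      rw [conj_eq_iff]
      exact eq_comm
    refine Prod.ext ?_ ?_
    · show s i * (π ω * t * (π ω)⁻¹) * s i = (s i * π ω) * t * (s i * π ω)⁻¹
      rw [mul_inv_rev, cs.inv_simple]
      group
    · show (z + cnt (ris ω) t) + (if π ω * t * (π ω)⁻¹ = s i then (1 : ZMod 2) else 0)
        = z + cnt (ris (i :: ω)) t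
      rw [hc, if_congr hiff rfl rfl]
      ring

/-- `nn cs w t` : the parity of the number of occurrences of `t` in the right inversion
sequence of any word for `w`. -/
noncomputable def nn (w t : W) : ZMod 2 := (refRep cs w (t, 0)).2

lemma nn_eq {ω : List B} {w : W} (hw : π ω = w) (t : W) : nn cs w t = cnt (ris ω) t := by
  rw [nn, ← hw, refRep_wordProd]
  simp

lemma rightInvSeq_append (ω₁ ω₂ : List B) :
    ris (ω₁ ++ ω₂) = (ris ω₁).map (fun u => (π ω₂)⁻¹ * u * π ω₂) ++ ris ω₂ := by
  induction ω₁ with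
  | nil => simp
  | cons i ω₁ ih =>
    show (π (ω₁ ++ ω₂))⁻¹ * s i * π (ω₁ ++ ω₂) :: ris (ω₁ ++ ω₂) = _
    rw [ih, cs.wordProd_append]
    simp only [List.map_cons, List.cons_append, mul_inv_rev]
    congr 1
    group

lemma leftInvSeq_eq_map_conj (ω : List B) :
    cs.leftInvSeq ω = (ris ω).map (fun u => π ω * u * (π ω)⁻¹) := by
  induction ω with
  | nil => simp
  | cons i ω ih =>
    show s i :: List.map (MulAut.conj (s i)) (cs.leftInvSeq ω) = _
    show _ = List.map _ ((π ω)⁻¹ * s i * π ω :: ris ω)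
    rw [ih]
    simp only [List.map_cons, List.map_map, cs.wordProd_cons]
    congr 1
    · rw [mul_inv_rev, cs.inv_simple]
      refine Eq.symm ?_
      calc s i * π ω * ((π ω)⁻¹ * s i * π ω) * ((π ω)⁻¹ * s i)
        = s i * (π ω * (π ω)⁻¹) * s i * (π ω * (π ω)⁻¹) * s i := by group
      _ = s i := by
          rw [mul_inv_cancel]
          calc s i * 1 * s i * 1 * s i = (s i * s i) * s i := by group
          _ = s i := by rw [cs.simple_mul_simple_self, one_mul]
    · apply List.map_congr_left
      intro u _
      show s i * (π ω * u * (π ω)⁻¹) * (s i)⁻¹ = (s i * π ω) * u * (s i * π ω)⁻¹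
      rw [mul_inv_rev, cs.inv_simple]
      group

lemma nn_self_of_isReflection {t : W} (ht : cs.IsReflection t) : nn cs t t = 1 := by
  obtain ⟨x, j, rfl⟩ := ht
  obtain ⟨ξ, hξ⟩ := cs.wordProd_surjective x
  set t := x * s j * x⁻¹ with hts
  have hword : π (ξ ++ j :: ξ.reverse) = t := by
    rw [cs.wordProd_append, cs.wordProd_cons, cs.wordProd_reverse, hξ, hts, mul_assoc]
  rw [nn_eq cs hword]
  rw [rightInvSeq_append]
  rw [cnt_append]
  have hy : π (j :: ξ.reverse) = s j * x⁻¹ := by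
    rw [cs.wordProd_cons, cs.wordProd_reverse, hξ]
  have hris2 : ris (j :: ξ.reverse) = t :: ris ξ.reverse := by
    show (π ξ.reverse)⁻¹ * s j * π ξ.reverse :: ris ξ.reverse = _
    rw [cs.wordProd_reverse, hξ, inv_inv, hts]
  have hpart1 : cnt ((ris ξ).map (fun u => (π (j :: ξ.reverse))⁻¹ * u * π (j :: ξ.reverse))) t
      = cnt (ris ξ) (s j) := by
    have : (fun u => (π (j :: ξ.reverse))⁻¹ * u * π (j :: ξ.reverse))
        = fun u : W => (x * (s j)⁻¹) * u * (x * (s j)⁻¹)⁻¹ := by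
      funext u
      rw [hy, mul_inv_rev, inv_inv, mul_inv_rev, inv_inv]
    rw [this, cnt_map_conj]
    congr 1
    rw [hts, mul_inv_rev, inv_inv, cs.inv_simple]
    calc (s j * x⁻¹) * (x * s j * x⁻¹) * (x * s j)
        = s j * (x⁻¹ * x) * s j * (x⁻¹ * x) * s j := by group
    _ = s j := by
        rw [inv_mul_cancel]
        calc s j * 1 * s j * 1 * s j = (s j * s j) * s j := by group
        _ = s j := by rw [cs.simple_mul_simple_self, one_mul]
  have hpart3 : cnt (ris ξ.reverse) t = cnt (ris ξ) (s j) := by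
    rw [cs.rightInvSeq_reverse, cnt_reverse, leftInvSeq_eq_map_conj, hξ, cnt_map_conj]
    congr 1
    rw [hts]
    group
  rw [hpart1, hris2, cnt_cons, hpart3]
  simp only [if_pos rfl]
  have h2 : ∀ a : ZMod 2, a + (1 + a) = 1 := by decide
  exact h2 _

lemma nn_one (t : W) : nn cs 1 t = 0 := by
  have : π ([] : List B) = (1 : W) := cs.wordProd_nil
  rw [nn_eq cs this]
  simp

lemma nn_mul_reflection {w t : W} (ht : cs.IsReflection t) :
    nn cs (w * t) t = nn cs w t + 1 := by
  obtain ⟨ζ, hζ⟩ := cs.wordProd_surjective t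
  obtain ⟨ω, hω⟩ := cs.wordProd_surjective w
  have h1 : refRep cs t (t, (0 : ZMod 2)) = (t, 1) := by
    have h0 := refRep_wordProd cs ζ t 0
    rw [hζ] at h0
    rw [h0]
    refine Prod.ext ?_ ?_
    · show t * t * t⁻¹ = t
      group
    · show (0 : ZMod 2) + cnt (ris ζ) t = 1
      rw [zero_add, ← nn_eq cs hζ, nn_self_of_isReflection cs ht]
  have h2 : nn cs (w * t) t = (refRep cs w (t, 1)).2 := by
    rw [nn, map_mul, Equiv.Perm.mul_apply, h1]
  have h3 := refRep_wordProd cs ω t 1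
  have h4 := refRep_wordProd cs ω t 0
  rw [hω] at h3 h4
  rw [h2, h3, nn, h4]
  show (1 : ZMod 2) + cnt (ris ω) t = ((0 : ZMod 2) + cnt (ris ω) t) + 1
  ring


lemma nn_zero_of_length_lt_aux (n : ℕ) : ∀ w t : W, cs.IsReflection t → cs.length w = n →
    ℓ w < ℓ (w * t) → nn cs w t = 0 := by
  induction n using Nat.strong_induction_on with
  | _ n ih =>
    intro w t ht hn hlt
    rcases eq_or_ne w 1 with rfl | hw
    · exact nn_one cs t
    · obtain ⟨i, hi⟩ := cs.exists_rightDescent_of_ne_one hw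
      set w₁ := w * s i with hw₁
      have hlen₁ : ℓ w₁ < ℓ w := hi
      obtain ⟨ω₁, hred₁, hprod₁⟩ := cs.exists_reduced_word' w₁
      have hprodw : π (ω₁ ++ [i]) = w := by
        rw [cs.wordProd_append, cs.wordProd_singleton, ← hprod₁, hw₁,
          mul_assoc, cs.simple_mul_simple_self, mul_one]
      have hti : t ≠ s i := by
        intro h
        rw [h] at hlt
        exact absurd (hlt.trans_eq (by rw [← hw₁])) (by omega)
      rw [nn_eq cs hprodw, rightInvSeq_append, cnt_append]
      have hris : ris [i] = [s i] := cs.rightInvSeq_singleton i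
      have hcnt2 : cnt (ris [i]) t = 0 := by
        rw [hris, cnt_cons]
        simp [Ne.symm hti]
      have hmap : cnt ((ris ω₁).map (fun u => (π [i])⁻¹ * u * π [i])) t
          = cnt (ris ω₁) (s i * t * s i) := by
        have hfun : (fun u : W => (π [i])⁻¹ * u * π [i]) = fun u : W => (s i)⁻¹ * u * ((s i)⁻¹)⁻¹ := by
          funext u
          rw [cs.wordProd_singleton, inv_inv]
        rw [hfun, cnt_map_conj, inv_inv, cs.inv_simple]
      set t' := s i * t * s i with ht'
      have ht'refl : cs.IsReflection t' := by
        have := ht.conj (s i)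
        rwa [cs.inv_simple] at this
      have hne : ℓ (w₁ * t') ≠ ℓ w₁ := ht'refl.length_mul_left_ne w₁
      have hwt : w * t = w₁ * t' * s i := by
        rw [hw₁, ht']
        calc w * t = w * (s i * s i) * t * (s i * s i) := by
              rw [cs.simple_mul_simple_self]; group
        _ = w * s i * (s i * t * s i) * s i := by group
      have hgt : ℓ w₁ < ℓ (w₁ * t') := by
        rcases lt_or_gt_of_ne hne with hc | hc
        · exfalso
          have h5 : ℓ (w * t) ≤ ℓ (w₁ * t') + 1 := by
            rw [hwt]
            calc ℓ (w₁ * t' * s i) ≤ ℓ (w₁ * t') + ℓ (s i) := cs.length_mul_le _ _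
            _ = ℓ (w₁ * t') + 1 := by rw [cs.length_simple]
          omega
        · exact hc
      have := ih (ℓ w₁) (by omega) w₁ t' ht'refl rfl hgt
      rw [nn_eq cs hprod₁.symm] at this
      rw [hmap, hcnt2, this, add_zero]

lemma nn_zero_of_length_lt {w t : W} (ht : cs.IsReflection t) (hlt : ℓ w < ℓ (w * t)) :
    nn cs w t = 0 :=
  nn_zero_of_length_lt_aux cs (ℓ w) w t ht rfl hlt

lemma nn_one_of_length_lt {w t : W} (ht : cs.IsReflection t) (hlt : ℓ (w * t) < ℓ w) :
    nn cs w t = 1 := by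
  have h1 : ℓ (w * t) < ℓ (w * t * t) := by
    rw [mul_assoc, ht.mul_self, mul_one]
    exact hlt
  have h0 : nn cs (w * t) t = 0 := nn_zero_of_length_lt cs ht h1
  have h2 := nn_mul_reflection cs (w := w) ht
  have h3 : nn cs (w * t) t = nn cs w t + 1 := h2
  have : ∀ a : ZMod 2, a + 1 = 0 → a = 1 := by decide
  exact this _ (h3 ▸ h0)

/-- **Strong exchange property.** -/
theorem strong_exchange (ω : List B) {t : W} (ht : cs.IsReflection t)
    (hlt : ℓ (π ω * t) < ℓ (π ω)) :
    ∃ j < ω.length, π ω * t = π (ω.eraseIdx j) := by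
  have h1 : nn cs (π ω) t = 1 := nn_one_of_length_lt cs ht hlt
  rw [nn_eq cs rfl] at h1
  have h2 : t ∈ ris ω := mem_of_cnt_ne_zero (by rw [h1]; exact one_ne_zero)
  obtain ⟨j, hj, hget⟩ := List.mem_iff_getElem.mp h2
  rw [cs.length_rightInvSeq] at hj
  refine ⟨j, hj, ?_⟩
  rw [← cs.wordProd_mul_getD_rightInvSeq ω j]
  congr 1
  rw [← hget]
  exact (List.getD_eq_getElem _ 1 (by rw [cs.length_rightInvSeq]; exact hj)).symm


section Parabolic

variable (J : Set B)

lemma wordProd_mem_parabolic {τ : List B} (hτ : ∀ b ∈ τ, b ∈ J) :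
    π τ ∈ parabolic cs J := by
  induction τ with
  | nil => rw [cs.wordProd_nil]; exact one_mem _
  | cons i τ ih =>
    rw [cs.wordProd_cons]
    exact mul_mem
      (Subgroup.subset_closure ⟨i, hτ i (List.mem_cons_self), rfl⟩)
      (ih fun b hb => hτ b (List.mem_cons_of_mem _ hb))

lemma exists_word_of_mem_parabolic {x : W} (hx : x ∈ parabolic cs J) :
    ∃ τ : List B, (∀ b ∈ τ, b ∈ J) ∧ π τ = x := by
  induction hx using Subgroup.closure_induction with
  | mem x hx =>
    obtain ⟨j, hj, rfl⟩ := hx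
    exact ⟨[j], by simpa using hj, cs.wordProd_singleton j⟩
  | one => exact ⟨[], by simp, cs.wordProd_nil⟩
  | mul x y _ _ hx hy =>
    obtain ⟨τ₁, h1, rfl⟩ := hx
    obtain ⟨τ₂, h2, rfl⟩ := hy
    exact ⟨τ₁ ++ τ₂, by
      intro b hb
      rcases List.mem_append.mp hb with h | h
      exacts [h1 b h, h2 b h], cs.wordProd_append τ₁ τ₂⟩
  | inv x _ hx =>
    obtain ⟨τ, h1, rfl⟩ := hx
    exact ⟨τ.reverse, fun b hb => h1 b (List.mem_reverse.mp hb), cs.wordProd_reverse τ⟩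

lemma exists_shorter_word (τ : List B) (hnr : ¬ cs.IsReduced τ) :
    ∃ τ' : List B, τ'.length + 2 = τ.length ∧ (∀ b ∈ τ', b ∈ τ) ∧ π τ' = π τ := by
  have hnil : τ ≠ [] := by
    rintro rfl
    exact hnr (by simp [CoxeterSystem.IsReduced])
  have hex : ∃ k, ¬ cs.IsReduced (τ.take (k + 1)) := by
    refine ⟨τ.length - 1, ?_⟩
    have : τ.length - 1 + 1 = τ.length := by
      have := List.length_pos_iff.mpr hnil
      omega
    rwa [this, List.take_length]
  set k₀ := Nat.find hex with hk₀def
  have hk₀ : ¬ cs.IsReduced (τ.take (k₀ + 1)) := Nat.find_spec hex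
  have hred : cs.IsReduced (τ.take k₀) := by
    rcases Nat.eq_zero_or_pos k₀ with h0 | h0
    · rw [h0, List.take_zero]
      simp [CoxeterSystem.IsReduced]
    · have := Nat.find_min hex (m := k₀ - 1) (by omega)
      rw [not_not] at this
      have hi : k₀ - 1 + 1 = k₀ := by omega
      rwa [hi] at this
  have hk₀lt : k₀ < τ.length := by
    by_contra hge
    push_neg at hge
    rw [List.take_of_length_le (by omega)] at hk₀
    rw [List.take_of_length_le hge] at hred
    exact hk₀ hred
  set σ := τ.take k₀ with hσ
  set b := τ.get ⟨k₀, hk₀lt⟩ with hb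
  have hlenσ : σ.length = k₀ := by
    rw [hσ, List.length_take]
    omega
  have htake1 : τ.take (k₀ + 1) = σ ++ [b] := by
    rw [hσ, hb, List.take_succ]
    congr 1
    rw [List.getElem?_eq_getElem hk₀lt]
    rfl
  have hlt : ℓ (π σ * s b) < ℓ (π σ) := by
    have hform : π (τ.take (k₀ + 1)) = π σ * s b := by
      rw [htake1, cs.wordProd_append, cs.wordProd_singleton]
    have hℓσ : ℓ (π σ) = k₀ := by rw [hred, hlenσ]
    have hne : ℓ (π σ * s b) ≠ k₀ + 1 := by
      intro h
      apply hk₀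
      show ℓ (π (τ.take (k₀ + 1))) = (τ.take (k₀ + 1)).length
      rw [hform, h, List.length_take]
      omega
    rcases cs.length_mul_simple (π σ) b with h | h
    · exact absurd (by rw [h, hℓσ]) hne
    · omega
  obtain ⟨j, hj, heq⟩ := strong_exchange cs σ (cs.isReflection_simple b) hlt
  have hsplit : π τ = π σ * s b * π (τ.drop (k₀ + 1)) := by
    conv_lhs => rw [← List.take_append_drop (k₀ + 1) τ]
    rw [cs.wordProd_append, htake1, cs.wordProd_append, cs.wordProd_singleton]
  refine ⟨σ.eraseIdx j ++ τ.drop (k₀ + 1), ?_, ?_, ?_⟩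
  · rw [List.length_append, List.length_drop]
    have := List.length_eraseIdx_add_one (l := σ) (i := j) (by omega)
    omega
  · intro x hx
    rcases List.mem_append.mp hx with h | h
    · exact List.take_subset k₀ τ (List.mem_of_mem_eraseIdx h)
    · exact List.drop_subset _ τ h
  · rw [cs.wordProd_append, ← heq, hsplit]

lemma exists_reduced_J_word_aux (n : ℕ) : ∀ τ : List B, τ.length ≤ n → (∀ b ∈ τ, b ∈ J) →
    ∃ τ' : List B, (∀ b ∈ τ', b ∈ J) ∧ cs.IsReduced τ' ∧ π τ' = π τ := by
  induction n using Nat.strong_induction_on with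
  | _ n ih =>
    intro τ hlen hτJ
    by_cases hr : cs.IsReduced τ
    · exact ⟨τ, hτJ, hr, rfl⟩
    · obtain ⟨τ', hlen', hmem, hprod⟩ := exists_shorter_word cs τ hr
      have h0 : τ.length ≠ 0 := by omega
      obtain ⟨τ'', h1, h2, h3⟩ := ih (n - 1) (by omega) τ' (by omega)
        (fun b hb => hτJ b (hmem b hb))
      exact ⟨τ'', h1, h2, by rw [h3, hprod]⟩

lemma exists_reduced_J_word (x : W) (hx : x ∈ parabolic cs J) :
    ∃ τ : List B, (∀ b ∈ τ, b ∈ J) ∧ cs.IsReduced τ ∧ π τ = x := by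
  obtain ⟨τ, hτJ, hτ⟩ := exists_word_of_mem_parabolic cs J hx
  obtain ⟨τ', h1, h2, h3⟩ := exists_reduced_J_word_aux cs J τ.length τ le_rfl hτJ
  exact ⟨τ', h1, h2, by rw [h3, hτ]⟩

end Parabolic


section MinReps

variable (J : Set B)

lemma minReps_mul_length {p : W} (hp : p ∈ minReps cs J) {a : W} (ha : a ∈ parabolic cs J) :
    ℓ (p * a) = ℓ p + ℓ a := by
  obtain ⟨τ, hτJ, hτred, hτprod⟩ := exists_reduced_J_word cs J a ha
  have key : ∀ τ : List B, (∀ b ∈ τ, b ∈ J) → cs.IsReduced τ →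
      ℓ (p * π τ) = ℓ p + τ.length := by
    intro τ
    induction τ using List.reverseRecOn with
    | nil => simp [cs.wordProd_nil]
    | append_singleton τ₁ j ih =>
      intro hJ hredfull
      have hJ₁ : ∀ b ∈ τ₁, b ∈ J := fun b hb => hJ b (List.mem_append_left _ hb)
      have hred₁ : cs.IsReduced τ₁ := by
        have := hredfull.take τ₁.length
        rwa [List.take_left] at this
      have ih₁ := ih hJ₁ hred₁
      set a₁ := π τ₁ with ha₁
      have hsplit : π (τ₁ ++ [j]) = a₁ * s j := by
        rw [cs.wordProd_append, cs.wordProd_singleton]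
      rw [hsplit, List.length_append, List.length_singleton, ← mul_assoc]
      rcases cs.length_mul_simple (p * a₁) j with h | h
      · rw [h, ih₁]; omega
      · exfalso
        -- ℓ (p * a₁ * s j) + 1 = ℓ (p * a₁); apply strong exchange
        obtain ⟨ωp, hωpred, hωp⟩ := cs.exists_reduced_word' p
        have hprodcat : π (ωp ++ τ₁) = p * a₁ := by
          rw [cs.wordProd_append, ← hωp]
        have hlt : ℓ (π (ωp ++ τ₁) * s j) < ℓ (π (ωp ++ τ₁)) := by
          rw [hprodcat]; omega
        obtain ⟨k, hk, heq⟩ := strong_exchange cs (ωp ++ τ₁) (cs.isReflection_simple j) hlt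
        rw [hprodcat] at heq
        rw [List.length_append] at hk
        have hℓp : ℓ p = ωp.length := by rw [hωp]; exact hωpred
        rcases lt_or_ge k ωp.length with hcase | hcase
        · rw [List.eraseIdx_append_of_lt_length hcase] at heq
          rw [cs.wordProd_append] at heq
          have hc : a₁ * s j * a₁⁻¹ ∈ parabolic cs J := by
            have ha₁mem : a₁ ∈ parabolic cs J := wordProd_mem_parabolic cs J hJ₁
            exact mul_mem (mul_mem ha₁mem
              (Subgroup.subset_closure ⟨j, hJ j (by simp), rfl⟩)) (inv_mem ha₁mem)
          have heq2 : π (ωp.eraseIdx k) = p * (a₁ * s j * a₁⁻¹) := by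
            have : π (ωp.eraseIdx k) * a₁ = p * a₁ * s j := heq.symm
            calc π (ωp.eraseIdx k) = π (ωp.eraseIdx k) * a₁ * a₁⁻¹ := by group
            _ = p * a₁ * s j * a₁⁻¹ := by rw [this]
            _ = p * (a₁ * s j * a₁⁻¹) := by group
          have h1 : ℓ p ≤ ℓ (p * (a₁ * s j * a₁⁻¹)) := hp _ hc
          have h2 : ℓ (p * (a₁ * s j * a₁⁻¹)) ≤ (ωp.eraseIdx k).length := by
            rw [← heq2]; exact cs.length_wordProd_le _
          have h3 := List.length_eraseIdx_add_one (l := ωp) (i := k) hcase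
          omega
        · rw [List.eraseIdx_append_of_length_le hcase] at heq
          rw [cs.wordProd_append] at heq
          have heq2 : π (τ₁.eraseIdx (k - ωp.length)) = a₁ * s j := by
            have : π ωp * π (τ₁.eraseIdx (k - ωp.length)) = p * a₁ * s j := heq.symm
            rw [← hωp] at this
            calc π (τ₁.eraseIdx (k - ωp.length))
                = p⁻¹ * (p * π (τ₁.eraseIdx (k - ωp.length))) := by group
            _ = p⁻¹ * (p * a₁ * s j) := by rw [this]
            _ = a₁ * s j := by group
          have h1 : ℓ (a₁ * s j) ≤ (τ₁.eraseIdx (k - ωp.length)).length := by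
            rw [← heq2]; exact cs.length_wordProd_le _
          have h2 : (τ₁.eraseIdx (k - ωp.length)).length ≤ τ₁.length :=
            List.length_eraseIdx_le _ _
          have h3 : ℓ (a₁ * s j) = τ₁.length + 1 := by
            have := hredfull
            rw [CoxeterSystem.IsReduced, hsplit, List.length_append,
              List.length_singleton] at this
            exact this
          omega
  rw [← hτprod, key τ hτJ hτred, hτred]

lemma minReps_unique {p q a b : W} (hp : p ∈ minReps cs J) (hq : q ∈ minReps cs J)
    (ha : a ∈ parabolic cs J) (hb : b ∈ parabolic cs J) (h : p * a = q * b) :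
    p = q ∧ a = b := by
  have hc : b * a⁻¹ ∈ parabolic cs J := mul_mem hb (inv_mem ha)
  have hpq : p = q * (b * a⁻¹) := by
    calc p = (p * a) * a⁻¹ := by group
    _ = (q * b) * a⁻¹ := by rw [h]
    _ = q * (b * a⁻¹) := by group
  have h1 : ℓ p = ℓ q + ℓ (b * a⁻¹) := by
    rw [hpq]; exact minReps_mul_length cs J hq hc
  have hqp : q = p * (b * a⁻¹)⁻¹ := by rw [hpq]; group
  have h2 : ℓ q = ℓ p + ℓ (b * a⁻¹)⁻¹ := by
    rw [hqp]; exact minReps_mul_length cs J hp (inv_mem hc)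
  have h3 : ℓ (b * a⁻¹) = 0 := by omega
  have h4 : b * a⁻¹ = 1 := cs.length_eq_zero_iff.mp h3
  have h5 : p = q := by rw [hpq, h4, mul_one]
  refine ⟨h5, ?_⟩
  have : b = a := by
    calc b = (b * a⁻¹) * a := by group
    _ = a := by rw [h4, one_mul]
  exact this.symm

lemma exists_minRep_decomp (y : W) :
    ∃ p ∈ minReps cs J, ∃ a ∈ parabolic cs J, y = p * a := by
  have hex : ∃ n, ∃ c ∈ parabolic cs J, ℓ (y * c) = n :=
    ⟨ℓ y, 1, one_mem _, by rw [mul_one]⟩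
  obtain ⟨c₀, hc₀, hlc₀⟩ := Nat.find_spec hex
  refine ⟨y * c₀, ?_, c₀⁻¹, inv_mem hc₀, by group⟩
  intro v hv
  have h1 : Nat.find hex ≤ ℓ (y * (c₀ * v)) :=
    Nat.find_min' hex ⟨c₀ * v, mul_mem hc₀ hv, rfl⟩
  rw [← mul_assoc] at h1
  omega

end MinReps

lemma sublist_eq_erase {l' l : List B} (h : l'.Sublist l) (hl : l.length = l'.length + 1) :
    ∃ l₁ x l₂, l = l₁ ++ x :: l₂ ∧ l' = l₁ ++ l₂ := by
  induction h with
  | slnil => simp at hl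
  | cons a h ih =>
    rename_i l₁' l₂' 
    have : l₁' = l₂' := h.eq_of_length (by simpa using hl.symm)
    exact ⟨[], a, l₂', rfl, by rw [this]; rfl⟩
  | cons_cons a h ih =>
    rename_i l₁' l₂' 
    have hlen : l₂'.length = l₁'.length + 1 := by simpa using hl
    obtain ⟨l₁, x, l₂, h1, h2⟩ := ih hlen
    exact ⟨a :: l₁, x, l₂, by rw [h1]; rfl, by rw [h2]; rfl⟩


theorem exists_factorization_of_cov_aux (J : Set B) (w' w : W)
    (hw' : w' ∈ minReps cs J) (hw : w ∈ minReps cs J)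
    (hne : w' ≠ w)
    (u v : W) (hu : u ∈ parabolic cs J) (hv : v ∈ parabolic cs J)
    (hle : bruhatLE cs (w' * u) (w * v))
    (hlen : cs.length (w * v) = cs.length (w' * u) + 1) :
    ∃ r ∈ parabolic cs J, u = r * v ∧ cs.length u = cs.length r + cs.length v := by
  have hl1 : ℓ (w' * u) = ℓ w' + ℓ u := minReps_mul_length cs J hw' hu
  have hl2 : ℓ (w * v) = ℓ w + ℓ v := minReps_mul_length cs J hw hv
  obtain ⟨Ω, hΩred, hΩprod, Ω', hsub, hΩ'red, hΩ'prod⟩ := hle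
  have hΩlen : Ω.length = ℓ (w * v) := by rw [← hΩprod]; exact hΩred.symm
  have hΩ'len : Ω'.length = ℓ (w' * u) := by rw [← hΩ'prod]; exact hΩ'red.symm
  obtain ⟨Ω₁, b, Ω₂, hΩeq, hΩ'eq⟩ := sublist_eq_erase hsub (by omega)
  set t := (π Ω₂)⁻¹ * s b * π Ω₂ with hts
  have htrefl : cs.IsReflection t := ⟨(π Ω₂)⁻¹, b, by rw [inv_inv]⟩
  have hwvt : (w * v) * t = w' * u := by
    rw [← hΩprod, ← hΩ'prod, hΩeq, hΩ'eq, hts, cs.wordProd_append, cs.wordProd_append,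
      cs.wordProd_cons]
    group
    rw [cs.simple_mul_simple_cancel_right]
  obtain ⟨ωw, hωwred, hωw⟩ := cs.exists_reduced_word' w
  obtain ⟨τ, hτJ, hτred, hτprod⟩ := exists_reduced_J_word cs J v hv
  have hprodwv : π (ωw ++ τ) = w * v := by
    rw [cs.wordProd_append, ← hωw, hτprod]
  have hSE := strong_exchange cs (ωw ++ τ) htrefl
    (by rw [hprodwv, hwvt]; omega)
  obtain ⟨k, hk, heq⟩ := hSE
  rw [hprodwv, hwvt] at heq
  have hℓw : ℓ w = ωw.length := by rw [hωw]; exact hωwred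
  rcases lt_or_ge k ωw.length with hcase | hcase
  · -- letter deleted in the `w` part
    rw [List.eraseIdx_append_of_lt_length hcase, cs.wordProd_append] at heq
    set y := π (ωw.eraseIdx k) with hy
    have heq2 : w' * u = y * v := by rw [heq, hτprod]
    obtain ⟨p, hpmin, a, hapar, hya⟩ := exists_minRep_decomp cs J y
    have heq3 : w' * u = p * (a * v) := by rw [heq2, hya, mul_assoc]
    obtain ⟨hpw', huav⟩ := minReps_unique cs J hw' hpmin hu (mul_mem hapar hv) heq3
    refine ⟨a, hapar, huav, ?_⟩
    have h5 : ℓ y = ℓ p + ℓ a := by rw [hya]; exact minReps_mul_length cs J hpmin hapar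
    have h6 : ℓ y ≤ (ωw.eraseIdx k).length := by rw [hy]; exact cs.length_wordProd_le _
    have h7 := List.length_eraseIdx_add_one (l := ωw) (i := k) hcase
    have h8 : ℓ u ≤ ℓ a + ℓ v := by
      rw [huav]
      exact cs.length_mul_le a v
    rw [← hpw'] at h5
    omega
  · -- letter deleted in the `v` part : contradiction with w' ≠ w
    rw [List.eraseIdx_append_of_length_le hcase, cs.wordProd_append, ← hωw] at heq
    have hv' : π (τ.eraseIdx (k - ωw.length)) ∈ parabolic cs J :=
      wordProd_mem_parabolic cs J
        (fun x hx => hτJ x (List.mem_of_mem_eraseIdx hx))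
    obtain ⟨hww', _⟩ := minReps_unique cs J hw' hw hu hv' heq
    exact absurd hww' hne


end Aux

/-- If w', w ∈ W^J with w' < w, u, v ∈ W_J and w'u ⋖ wv, then u = rv for
some r ∈ W_J with ℓ(u) = ℓ(r) + ℓ(v). -/
theorem exists_factorization_of_cov
    (cs : CoxeterSystem M W) (J : Set B) (w' w : W)
    (hw' : w' ∈ minReps cs J) (hw : w ∈ minReps cs J) (hlt : bruhatLT cs w' w)
    (u v : W) (hu : u ∈ parabolic cs J) (hv : v ∈ parabolic cs J)
    (hcov : bruhatCov cs (w' * u) (w * v)) :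
    ∃ r ∈ parabolic cs J, u = r * v ∧ cs.length u = cs.length r + cs.length v := by
  obtain ⟨⟨hle, _⟩, hlen⟩ := hcov
  exact exists_factorization_of_cov_aux cs J w' w hw' hw hlt.2 u v hu hv hle hlen

end TNNFlag
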